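/- arXiv:1011.1037 — 5 statements merged into one kernel-verified Lean document; each statement's English description precedes it below -/
import Mathlib

section
/- Let F : ℝ^k → ℝ be continuous and homogeneous of degree p > 0. Then for every ε > 0 there exists a constant C(ε) > 0 such that |F(s + t) − F(s)| ≤ ε|s|^p + C(ε)|t|^p for all s, t ∈ ℝ^k. -/
/-!
Homogeneity reduces everything to the unit sphere. If `‖t‖` is small compared with `‖s‖`, rescale by
`‖s‖`: the difference becomes `‖s‖ ^ p (F (u + v) - F u)` with `‖u‖ = 1` and `‖v‖` small, which is
at most `ε ‖s‖ ^ p` by uniform continuity of `F` on the ball of radius `2`. Otherwise `‖s‖` and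
`‖s + t‖` are both `O(‖t‖)`, and the bound `|F x| ≤ M ‖x‖ ^ p` (from the maximum of `|F|` on the
sphere) gives a `C ‖t‖ ^ p` estimate.
-/

open Metric

section Homogeneous

variable {E : Type*} [NormedAddCommGroup E] [NormedSpace ℝ E] {p : ℝ} {F : E → ℝ}

theorem eq_rpow_mul_inv_smul_of_homogeneous (hF : ∀ l : ℝ, 0 < l → ∀ t, F (l • t) = l ^ p * F t)
    {c : ℝ} (hc : 0 < c) (x : E) : F x = c ^ p * F (c⁻¹ • x) := by
  rw [← hF c hc, smul_inv_smul₀ hc.ne']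

theorem map_zero_of_homogeneous (hp : 0 < p)
    (hF : ∀ l : ℝ, 0 < l → ∀ t, F (l • t) = l ^ p * F t) : F 0 = 0 := by
  have h2 := hF 2 two_pos 0
  rw [smul_zero] at h2
  have h2p : (1 : ℝ) < 2 ^ p := Real.one_lt_rpow one_lt_two hp
  have : (2 ^ p - 1) * F 0 = 0 := by linarith
  exact (mul_eq_zero.1 this).resolve_left (by linarith)

theorem exists_abs_le_mul_norm_rpow_of_homogeneous [ProperSpace E] (hp : 0 < p)
    (hFc : Continuous F) (hF : ∀ l : ℝ, 0 < l → ∀ t, F (l • t) = l ^ p * F t) :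
    ∃ M, 0 < M ∧ ∀ x, |F x| ≤ M * ‖x‖ ^ p := by
  obtain ⟨M₀, hM₀⟩ := (isCompact_sphere (0 : E) 1).exists_bound_of_continuousOn hFc.continuousOn
  refine ⟨max M₀ 1, by positivity, fun x => ?_⟩
  rcases eq_or_ne x 0 with rfl | hx
  · simp [map_zero_of_homogeneous hp hF, Real.zero_rpow hp.ne']
  have hunit : ‖x‖⁻¹ • x ∈ sphere (0 : E) 1 :=
    mem_sphere_zero_iff_norm.2 (norm_smul_inv_norm hx)
  rw [eq_rpow_mul_inv_smul_of_homogeneous hF (norm_pos_iff.2 hx) x, abs_mul,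
    abs_of_nonneg (by positivity), mul_comm]
  gcongr
  exact (hM₀ _ hunit).trans (le_max_left _ _)

theorem exists_abs_map_add_sub_le_of_norm_lt_of_homogeneous [ProperSpace E] (hFc : Continuous F)
    (hF : ∀ l : ℝ, 0 < l → ∀ t, F (l • t) = l ^ p * F t) {ε : ℝ} (hε : 0 < ε) :
    ∃ δ, 0 < δ ∧ ∀ s t : E, ‖t‖ < δ * ‖s‖ → |F (s + t) - F s| ≤ ε * ‖s‖ ^ p := by
  obtain ⟨δ₀, hδ₀, hδ⟩ := Metric.uniformContinuousOn_iff.1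
    ((isCompact_closedBall (0 : E) 2).uniformContinuousOn_of_continuous hFc.continuousOn) ε hε
  refine ⟨min δ₀ 1, lt_min hδ₀ one_pos, fun s t hts => ?_⟩
  have hs : 0 < ‖s‖ := pos_of_mul_pos_right ((norm_nonneg t).trans_lt hts) (by positivity)
  set u := ‖s‖⁻¹ • s
  set v := ‖s‖⁻¹ • t
  have hu : ‖u‖ = 1 := norm_smul_inv_norm (norm_pos_iff.1 hs)
  have hv : ‖v‖ < min δ₀ 1 := by
    rw [norm_smul, norm_inv, norm_norm, inv_mul_lt_iff₀ hs, mul_comm]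
    exact hts
  have hu_mem : u ∈ closedBall (0 : E) 2 := by
    rw [mem_closedBall_zero_iff, hu]; norm_num
  have huv_mem : u + v ∈ closedBall (0 : E) 2 := by
    rw [mem_closedBall_zero_iff]
    linarith [norm_add_le u v, min_le_right δ₀ 1]
  have hdist : dist (u + v) u < δ₀ := by
    rw [dist_eq_norm, add_sub_cancel_left]
    exact hv.trans_le (min_le_left _ _)
  have hclose : |F (u + v) - F u| ≤ ε := (hδ _ huv_mem _ hu_mem hdist).le
  rw [eq_rpow_mul_inv_smul_of_homogeneous hF hs (s + t), eq_rpow_mul_inv_smul_of_homogeneous hF hs s,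
    smul_add, ← mul_sub, abs_mul, abs_of_nonneg (by positivity), mul_comm ε]
  gcongr

end Homogeneous

theorem abs_map_add_sub_le_of_le_norm {E : Type*} [SeminormedAddCommGroup E] {p M δ : ℝ}
    {F : E → ℝ} (hp : 0 ≤ p) (hM0 : 0 ≤ M) (hM : ∀ x, |F x| ≤ M * ‖x‖ ^ p) (hδ : 0 < δ) {s t : E}
    (hst : δ * ‖s‖ ≤ ‖t‖) : |F (s + t) - F s| ≤ 2 * M * (δ⁻¹ + 1) ^ p * ‖t‖ ^ p := by
  have hs : ‖s‖ ≤ δ⁻¹ * ‖t‖ := by rwa [le_inv_mul_iff₀ hδ]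
  have hbound : ∀ x : E, ‖x‖ ≤ (δ⁻¹ + 1) * ‖t‖ → |F x| ≤ M * (δ⁻¹ + 1) ^ p * ‖t‖ ^ p := by
    intro x hx
    rw [mul_assoc, ← Real.mul_rpow (by positivity) (norm_nonneg t)]
    exact (hM x).trans (by gcongr)
  calc |F (s + t) - F s| ≤ |F (s + t)| + |F s| := abs_sub _ _
    _ ≤ M * (δ⁻¹ + 1) ^ p * ‖t‖ ^ p + M * (δ⁻¹ + 1) ^ p * ‖t‖ ^ p := by
      gcongr <;> apply hbound
      · linarith [norm_add_le s t]
      · linarith [norm_nonneg t]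
    _ = 2 * M * (δ⁻¹ + 1) ^ p * ‖t‖ ^ p := by ring

theorem stmt1_general (k : ℕ) (p : ℝ) (hp : 0 < p)
    (F : EuclideanSpace ℝ (Fin k) → ℝ)
    (hFcont : Continuous F)
    (hFhom : ∀ l : ℝ, 0 < l → ∀ t, F (l • t) = l ^ p * F t) :
    ∀ ε : ℝ, 0 < ε → ∃ C : ℝ, 0 < C ∧
      ∀ s t : EuclideanSpace ℝ (Fin k),
        |F (s + t) - F s| ≤ ε * ‖s‖ ^ p + C * ‖t‖ ^ p := by
  intro ε hε
  obtain ⟨M, hM0, hM⟩ := exists_abs_le_mul_norm_rpow_of_homogeneous hp hFcont hFhom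
  obtain ⟨δ, hδ0, hδ⟩ := exists_abs_map_add_sub_le_of_norm_lt_of_homogeneous hFcont hFhom hε
  refine ⟨2 * M * (δ⁻¹ + 1) ^ p, by positivity, fun s t => ?_⟩
  rcases lt_or_ge ‖t‖ (δ * ‖s‖) with hsmall | hlarge
  · exact le_add_of_le_of_nonneg (hδ s t hsmall) (by positivity)
  · exact le_add_of_nonneg_of_le (by positivity)
      (abs_map_add_sub_le_of_le_norm hp.le hM0.le hM hδ0 hlarge)

/-- Splitting inequality for continuous positively homogeneous functions:
for every `ε > 0` there is `C > 0` with
`|F (s + t) - F s| ≤ ε * ‖s‖ ^ p + C * ‖t‖ ^ p` for all `s t : ℝ^k`. -/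
theorem stmt1 (k : ℕ) (hk : 1 ≤ k) (p : ℝ) (hp : 0 < p)
    (F : EuclideanSpace ℝ (Fin k) → ℝ)
    (hFcont : Continuous F)
    (hFhom : ∀ l : ℝ, 0 < l → ∀ t, F (l • t) = l ^ p * F t) :
    ∀ ε : ℝ, 0 < ε → ∃ C : ℝ, 0 < C ∧
      ∀ s t : EuclideanSpace ℝ (Fin k),
        |F (s + t) - F s| ≤ ε * ‖s‖ ^ p + C * ‖t‖ ^ p :=
  stmt1_general k p hp F hFcont hFhom
end

section
/- (Approximation of homogeneous functions) Let M be a compact smooth manifold, k ≥ 1, p > 1, and let H₀ : M × ℝ^k → ℝ be continuous, positive for t ≠ 0, and homogeneous of degree p in t. Then for every ε > 0 there exists H : M × ℝ^k → ℝ, continuous, positive for t ≠ 0, of class C¹ in t, homogeneous of degree p in t, such that |H(x,t) − H₀(x,t)| ≤ ε|t|^p for all (x,t). -/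
/-!
Smooth `H₀` in `t` near the unit sphere by convolution with a bump function, and extend the
result from the sphere `p`-homogeneously. The derivative of a `p`-homogeneous function is
`(p - 1)`-homogeneous, so for `p > 1` it tends to `0` at the origin and the extension is `C¹`
there. The difference with `H₀` is `p`-homogeneous, hence bounded by `ε ‖t‖ ^ p` as soon as it
is bounded by `ε` on the sphere.
-/

open Set Filter Topology Metric MeasureTheory
open scoped ContDiff Convolution

def IsPosHomogeneous {E F : Type*} [AddCommGroup E] [Module ℝ E] [AddCommGroup F] [Module ℝ F]
    (p : ℝ) (f : E → F) : Prop :=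
  ∀ l : ℝ, 0 < l → ∀ t, f (l • t) = l ^ p • f t

lemma tendsto_nhds_zero_of_norm_le_rpow {X E F : Type*} [NormedAddCommGroup E]
    [NormedAddCommGroup F] {l : Filter X} {p : ℝ} {u : X → E} {v : X → F}
    (hu : Tendsto u l (𝓝 0)) (hp : 0 < p) {C : ℝ} (hv : ∀ x, ‖v x‖ ≤ C * ‖u x‖ ^ p) :
    Tendsto v l (𝓝 0) := by
  refine squeeze_zero_norm hv ?_
  simpa [Real.zero_rpow hp.ne'] using
    ((Real.continuous_rpow_const hp.le).tendsto' _ _ (Real.zero_rpow hp.ne')).comp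
      (tendsto_norm_zero.comp hu) |>.const_mul C

section

variable {E F : Type*} [NormedAddCommGroup E] [NormedSpace ℝ E] [NormedAddCommGroup F]
  [NormedSpace ℝ F] {p : ℝ} {f g : E → F}

namespace IsPosHomogeneous

lemma sub (hf : IsPosHomogeneous p f) (hg : IsPosHomogeneous p g) :
    IsPosHomogeneous p (f - g) := by
  intro l hl t
  simp [hf l hl, hg l hl, smul_sub]

lemma map_zero (hf : IsPosHomogeneous p f) (hp : p ≠ 0) : f 0 = 0 := by
  have h : f 0 = Real.exp p • f 0 := by
    simpa [Real.exp_one_rpow] using hf (Real.exp 1) (Real.exp_pos 1) 0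
  have : (Real.exp p - 1) • f 0 = 0 := by rw [sub_smul, ← h, one_smul, sub_self]
  exact (smul_eq_zero.1 this).resolve_left (sub_ne_zero.2 (by simpa using hp))

lemma eq_norm_rpow_smul (hf : IsPosHomogeneous p f) {t : E} (ht : t ≠ 0) :
    f t = ‖t‖ ^ p • f (‖t‖⁻¹ • t) := by
  conv_lhs => rw [← smul_inv_smul₀ (norm_ne_zero_iff.2 ht) t]
  exact hf _ (norm_pos_iff.2 ht) _

lemma norm_le (hf : IsPosHomogeneous p f) (hp : p ≠ 0) {C : ℝ}
    (hC : ∀ θ : E, ‖θ‖ = 1 → ‖f θ‖ ≤ C) (t : E) : ‖f t‖ ≤ C * ‖t‖ ^ p := by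
  rcases eq_or_ne t 0 with rfl | ht
  · simp [hf.map_zero hp, Real.zero_rpow hp]
  · rw [hf.eq_norm_rpow_smul ht, norm_smul, Real.norm_of_nonneg (by positivity), mul_comm]
    gcongr
    exact hC _ (norm_smul_inv_norm ht)

lemma exists_norm_le [FiniteDimensional ℝ E] (hf : IsPosHomogeneous p f) (hp : p ≠ 0)
    (hc : ContinuousOn f (sphere 0 1)) : ∃ C, ∀ t, ‖f t‖ ≤ C * ‖t‖ ^ p := by
  obtain ⟨C, hC⟩ := (isCompact_sphere (0 : E) 1).exists_bound_of_continuousOn hc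
  exact ⟨C, hf.norm_le hp fun θ hθ => hC θ (by simpa using hθ)⟩

lemma hasFDerivAt_zero [FiniteDimensional ℝ E] (hf : IsPosHomogeneous p f) (hp : 1 < p)
    (hc : ContinuousOn f (sphere 0 1)) : HasFDerivAt f (0 : E →L[ℝ] F) 0 := by
  obtain ⟨C, hC⟩ := hf.exists_norm_le (by linarith) hc
  have hlim : Tendsto (fun t : E => C * ‖t‖ ^ (p - 1)) (𝓝 0) (𝓝 0) :=
    tendsto_nhds_zero_of_norm_le_rpow tendsto_id (sub_pos.2 hp) (C := |C|)
      fun t => by simp [abs_of_nonneg (Real.rpow_nonneg (norm_nonneg t) _)]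
  rw [hasFDerivAt_iff_isLittleO_nhds_zero, Asymptotics.isLittleO_iff]
  intro c hc
  filter_upwards [hlim.eventually (ge_mem_nhds hc)] with t ht
  calc ‖f (0 + t) - f 0 - (0 : E →L[ℝ] F) t‖ = ‖f t‖ := by simp [hf.map_zero (by linarith)]
    _ ≤ C * ‖t‖ ^ (p - 1) * ‖t‖ := by
      rw [mul_assoc, ← Real.rpow_add_one' (norm_nonneg t) (by linarith), sub_add_cancel]
      exact hC t
    _ ≤ c * ‖t‖ := by gcongr

lemma fderiv (hf : IsPosHomogeneous p f) : IsPosHomogeneous (p - 1) (fderiv ℝ f) := by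
  intro l hl t
  have h := fderiv_comp_smul (𝕜 := ℝ) (f := f) (x := t) l
  rw [show (fun s => f (l • s)) = l ^ p • f from funext (hf l hl),
    fderiv_const_smul_field, Pi.smul_apply] at h
  rw [Real.rpow_sub_one hl.ne', div_eq_inv_mul, mul_smul, h, inv_smul_smul₀ hl.ne']

theorem contDiff_one [FiniteDimensional ℝ E] (hf : IsPosHomogeneous p f) (hp : 1 < p)
    (hC1 : ContDiffOn ℝ 1 f {0}ᶜ) : ContDiff ℝ 1 f := by
  have hsphere : sphere (0 : E) 1 ⊆ {0}ᶜ := fun θ hθ => ne_of_mem_sphere hθ one_ne_zero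
  have hd0 := hf.hasFDerivAt_zero hp (hC1.continuousOn.mono hsphere)
  have hfd : ContinuousOn (_root_.fderiv ℝ f) {0}ᶜ :=
    hC1.continuousOn_fderiv_of_isOpen isOpen_compl_singleton le_rfl
  obtain ⟨C, hC⟩ := hf.fderiv.exists_norm_le (by linarith) (hfd.mono hsphere)
  refine contDiff_one_iff_fderiv.2 ⟨fun t => ?_, continuous_iff_continuousAt.2 fun t => ?_⟩
  · rcases eq_or_ne t 0 with rfl | ht
    · exact hd0.differentiableAt
    · exact (hC1.contDiffAt (isOpen_compl_singleton.mem_nhds ht)).differentiableAt one_ne_zero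
  · rcases eq_or_ne t 0 with rfl | ht
    · rw [ContinuousAt, hd0.fderiv]
      exact tendsto_nhds_zero_of_norm_le_rpow tendsto_id (sub_pos.2 hp) hC
    · exact hfd.continuousAt (isOpen_compl_singleton.mem_nhds ht)

end IsPosHomogeneous

theorem continuous_of_isPosHomogeneous {X : Type*} [TopologicalSpace X] [CompactSpace X]
    [FiniteDimensional ℝ E] {f : X × E → F} (hp : 0 < p)
    (hf : ∀ x, IsPosHomogeneous p fun t => f (x, t)) (hc : ContinuousOn f {q | q.2 ≠ 0}) :
    Continuous f := by
  have hopen : IsOpen {q : X × E | q.2 ≠ 0} := isOpen_compl_singleton.preimage continuous_snd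
  obtain ⟨C, hC⟩ := (isCompact_univ.prod (isCompact_sphere (0 : E) 1)).exists_bound_of_continuousOn
    (hc.mono fun q hq => ne_of_mem_sphere hq.2 one_ne_zero)
  have hbound : ∀ q : X × E, ‖f q‖ ≤ C * ‖q.2‖ ^ p := fun q =>
    (hf q.1).norm_le hp.ne' (fun θ hθ => hC (q.1, θ) ⟨mem_univ _, by simpa using hθ⟩) q.2
  refine continuous_iff_continuousAt.2 fun ⟨x, t⟩ => ?_
  rcases eq_or_ne t 0 with rfl | ht
  · rw [ContinuousAt, (hf x).map_zero hp.ne']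
    exact tendsto_nhds_zero_of_norm_le_rpow (continuous_snd.tendsto' _ _ rfl) hp hbound
  · exact hc.continuousAt (hopen.mem_nhds ht)

noncomputable def homogeneousExtension (p : ℝ) (g : E → F) (t : E) : F := ‖t‖ ^ p • g (‖t‖⁻¹ • t)

lemma isPosHomogeneous_homogeneousExtension : IsPosHomogeneous p (homogeneousExtension p g) := by
  intro l hl t
  rcases eq_or_ne t 0 with rfl | ht
  · rcases eq_or_ne p 0 with rfl | hp <;> simp [homogeneousExtension, Real.zero_rpow, *]
  · have hnorm : ‖l • t‖ = l * ‖t‖ := by rw [norm_smul, Real.norm_of_nonneg hl.le]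
    simp only [homogeneousExtension, hnorm, Real.mul_rpow hl.le (norm_nonneg t), mul_smul,
      mul_inv]
    rw [smul_comm ‖t‖⁻¹ l t, inv_smul_smul₀ hl.ne']

lemma homogeneousExtension_of_norm_eq_one {θ : E} (hθ : ‖θ‖ = 1) :
    homogeneousExtension p g θ = g θ := by
  simp [homogeneousExtension, hθ]

lemma continuous_homogeneousExtension {X : Type*} [TopologicalSpace X] [CompactSpace X]
    [FiniteDimensional ℝ E] {g : X × E → F} (hg : Continuous g) (hp : 0 < p) :
    Continuous fun q : X × E => homogeneousExtension p (fun t => g (q.1, t)) q.2 := by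
  refine continuous_of_isPosHomogeneous hp
    (fun x => isPosHomogeneous_homogeneousExtension (g := fun t => g (x, t))) ?_
  intro q hq
  have hq : ‖q.2‖ ≠ 0 := norm_ne_zero_iff.2 hq
  have hnorm : ContinuousAt (fun q : X × E => ‖q.2‖) q := by fun_prop
  exact ((hnorm.rpow_const (Or.inr hp.le)).smul (hg.continuousAt.comp
    (continuousAt_fst.prodMk ((hnorm.inv₀ hq).smul continuousAt_snd)))).continuousWithinAt

end

section

variable {E F : Type*} [NormedAddCommGroup E] [InnerProductSpace ℝ E] [NormedAddCommGroup F]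
  [NormedSpace ℝ F] {p : ℝ} {g : E → F} {n : WithTop ℕ∞}

lemma contDiffOn_homogeneousExtension (hg : ContDiff ℝ n g) :
    ContDiffOn ℝ n (homogeneousExtension p g) {0}ᶜ := by
  intro t ht
  have hnorm : ‖t‖ ≠ 0 := norm_ne_zero_iff.2 ht
  have hn : ContDiffAt ℝ n (‖·‖) t := contDiffAt_norm ℝ ht
  exact (((Real.contDiffAt_rpow_const_of_ne hnorm).comp t hn).smul
    (hg.contDiffAt.comp t ((hn.inv hnorm).smul contDiffAt_id))).contDiffWithinAt

end

theorem IsCompact.exists_pos_forall_dist_add_lt {X E F : Type*} [TopologicalSpace X]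
    [SeminormedAddCommGroup E] [PseudoMetricSpace F] {f : X × E → F} (hf : Continuous f)
    {K : Set (X × E)} (hK : IsCompact K) {ε : ℝ} (hε : 0 < ε) :
    ∃ δ > 0, ∀ q ∈ K, ∀ s : E, ‖s‖ < δ → dist (f (q.1, q.2 + s)) (f q) < ε := by
  have hosc : Continuous fun z : E × (X × E) => dist (f (z.2.1, z.2.2 + z.1)) (f z.2) := by
    fun_prop
  have : ∀ᶠ s in 𝓝 (0 : E), ∀ q ∈ K, dist (f (q.1, q.2 + s)) (f q) < ε :=
    hK.eventually_forall_of_forall_eventually fun q _ =>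
      (hosc.tendsto (0, q)).eventually_lt_const (by simpa using hε)
  obtain ⟨δ, hδ, hδK⟩ := Metric.eventually_nhds_iff.1 this
  exact ⟨δ, hδ, fun q hq s hs => hδK (by rwa [dist_zero_right]) q hq⟩

theorem exists_continuous_contDiff_dist_le {X E F : Type*} [TopologicalSpace X] [CompactSpace X]
    [NormedAddCommGroup E] [NormedSpace ℝ E] [FiniteDimensional ℝ E] [NormedAddCommGroup F]
    [NormedSpace ℝ F] [CompleteSpace F] {f : X × E → F} (hf : Continuous f) {K : Set E}
    (hK : IsCompact K) {ε : ℝ} (hε : 0 < ε) :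
    ∃ g : X × E → F, Continuous g ∧ (∀ x, ContDiff ℝ ∞ fun t => g (x, t)) ∧
      ∀ x, ∀ t ∈ K, dist (g (x, t)) (f (x, t)) ≤ ε := by
  borelize E
  obtain ⟨R, hR, hKR⟩ := hK.isBounded.subset_closedBall_lt 0 0
  obtain ⟨δ, hδ, hmod⟩ := (isCompact_univ.prod hK).exists_pos_forall_dist_add_lt hf hε
  let χ : ContDiffBump (0 : E) := ⟨R + 1, R + 2, by linarith, by linarith⟩
  let φ : ContDiffBump (0 : E) :=
    ⟨min δ 1 / 2, min δ 1, by positivity, half_lt_self (by positivity)⟩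
  -- The cutoff `χ` gives the convolved functions a common compact support, as needed for the
  -- joint continuity of the convolution in `(x, t)`.
  let f' : X → E → F := fun x s => χ s • f (x, s)
  have hf' : Continuous ↿f' := (χ.continuous.comp continuous_snd).smul hf
  have hf'_eq : ∀ x s, ‖s‖ ≤ R + 1 → f' x s = f (x, s) := fun x s hs => by
    simp [f', χ.one_of_mem_closedBall (by simpa using hs)]
  refine ⟨fun q => (φ.normed .addHaar ⋆[ContinuousLinearMap.lsmul ℝ ℝ, .addHaar] f' q.1) q.2,
    ?_, fun x => ?_, fun x t ht => ?_⟩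
  · rw [← continuousOn_univ, ← univ_prod_univ]
    exact continuousOn_convolution_right_with_param (ContinuousLinearMap.lsmul ℝ ℝ)
      (isCompact_closedBall (0 : E) (R + 2))
      (fun x s _ hs => by simp [f', χ.zero_of_le_dist (not_le.1 hs).le])
      (φ.integrable_normed (μ := .addHaar)).locallyIntegrable hf'.continuousOn
  · exact φ.hasCompactSupport_normed.contDiff_convolution_left _ φ.contDiff_normed
      (hf'.comp (Continuous.prodMk_right x)).locallyIntegrable
  · have htR : ‖t‖ ≤ R := by simpa using hKR ht
    rw [← hf'_eq x t (by linarith)]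
    refine φ.dist_normed_convolution_le (hf'.comp (Continuous.prodMk_right x)).aestronglyMeasurable
      fun s hs => ?_
    have hst : ‖s - t‖ < min δ 1 := by rw [← dist_eq_norm]; exact hs
    have hsR : ‖s‖ ≤ R + 1 := by
      have := norm_le_norm_add_norm_sub' s t
      linarith [min_le_right δ 1]
    rw [hf'_eq x s hsR, hf'_eq x t (by linarith)]
    simpa using (hmod (x, t) ⟨mem_univ x, ht⟩ (s - t) (hst.trans_le (min_le_left _ _))).le

theorem stmt7_general (M : Type*) [TopologicalSpace M] [CompactSpace M]
    (k : ℕ) (p : ℝ) (hp : 1 < p)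
    (H0 : M × EuclideanSpace ℝ (Fin k) → ℝ)
    (hcont : Continuous H0)
    (hpos : ∀ x t, t ≠ 0 → 0 < H0 (x, t))
    (hhom : ∀ (x : M) (l : ℝ), 0 < l → ∀ t, H0 (x, l • t) = l ^ p * H0 (x, t))
    (ε : ℝ) (hε : 0 < ε) :
    ∃ H : M × EuclideanSpace ℝ (Fin k) → ℝ,
      Continuous H ∧
      (∀ x t, t ≠ 0 → 0 < H (x, t)) ∧
      (∀ x : M, ContDiff ℝ 1 (fun t => H (x, t))) ∧
      (∀ (x : M) (l : ℝ), 0 < l → ∀ t, H (x, l • t) = l ^ p * H (x, t)) ∧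
      ∀ x t, |H (x, t) - H0 (x, t)| ≤ ε * ‖t‖ ^ p := by
  have hsphere := (isCompact_univ (X := M)).prod (isCompact_sphere (0 : EuclideanSpace ℝ (Fin k)) 1)
  obtain ⟨m, hm, hmle⟩ := hsphere.exists_forall_le' (hcont.continuousOn (s := univ ×ˢ sphere 0 1))
    fun q hq => hpos q.1 q.2 (ne_of_mem_sphere hq.2 one_ne_zero)
  obtain ⟨F, hFc, hFsmooth, hFclose⟩ :=
    exists_continuous_contDiff_dist_le hcont (isCompact_sphere 0 1) (lt_min hε (half_pos hm))
  let H := fun q : M × EuclideanSpace ℝ (Fin k) => homogeneousExtension p (fun t => F (q.1, t)) q.2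
  have hHhom (x : M) : IsPosHomogeneous p fun t => H (x, t) :=
    isPosHomogeneous_homogeneousExtension (g := fun t => F (x, t))
  have hclose (x : M) (θ) (hθ : ‖θ‖ = 1) : |H (x, θ) - H0 (x, θ)| ≤ min ε (m / 2) := by
    rw [← Real.dist_eq, show H (x, θ) = F (x, θ) from homogeneousExtension_of_norm_eq_one hθ]
    exact hFclose x θ (by simpa using hθ)
  refine ⟨H, continuous_homogeneousExtension hFc (by linarith), fun x t ht => ?_,
    fun x => (hHhom x).contDiff_one hp (contDiffOn_homogeneousExtension ((hFsmooth x).of_le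
      (by exact_mod_cast le_top))), fun x => hHhom x, fun x t => ?_⟩
  · have hθ : ‖‖t‖⁻¹ • t‖ = 1 := norm_smul_inv_norm ht
    have h1 := (abs_le.1 (hclose x _ hθ)).1
    have h2 := hmle (x, ‖t‖⁻¹ • t) ⟨mem_univ x, by simpa using hθ⟩
    rw [(hHhom x).eq_norm_rpow_smul ht, smul_eq_mul]
    exact mul_pos (by positivity) (by linarith [min_le_right ε (m / 2)])
  · simpa using ((hHhom x).sub (p := p) fun l hl t => hhom x l hl t).norm_le (by linarith)
      (fun θ hθ => (hclose x θ hθ).trans (min_le_left _ _)) t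

/-- Approximation of positive homogeneous continuous functions: a continuous
function `H₀ : M × ℝ^k → ℝ`, positive for `t ≠ 0` and homogeneous of degree
`p > 1` in `t`, can be approximated by a function `H` of the same kind which is
moreover `C¹` in `t`, with `|H(x,t) - H₀(x,t)| ≤ ε |t|^p`. -/
theorem stmt7 (M : Type*) [TopologicalSpace M] [CompactSpace M]
    (k : ℕ) (hk : 1 ≤ k) (p : ℝ) (hp : 1 < p)
    (H0 : M × EuclideanSpace ℝ (Fin k) → ℝ)
    (hcont : Continuous H0)
    (hpos : ∀ x t, t ≠ 0 → 0 < H0 (x, t))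
    (hhom : ∀ (x : M) (l : ℝ), 0 < l → ∀ t, H0 (x, l • t) = l ^ p * H0 (x, t))
    (ε : ℝ) (hε : 0 < ε) :
    ∃ H : M × EuclideanSpace ℝ (Fin k) → ℝ,
      Continuous H ∧
      (∀ x t, t ≠ 0 → 0 < H (x, t)) ∧
      (∀ x : M, ContDiff ℝ 1 (fun t => H (x, t))) ∧
      (∀ (x : M) (l : ℝ), 0 < l → ∀ t, H (x, l • t) = l ^ p * H (x, t)) ∧
      ∀ x t, |H (x, t) - H0 (x, t)| ≤ ε * ‖t‖ ^ p :=
  stmt7_general M k p hp H0 hcont hpos hhom ε hε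
end

section
/- (Generalized Brézis–Lieb lemma) Let (M,g) be a smooth Riemannian manifold, F : ℝ^k → ℝ continuous, positive away from 0, and homogeneous of degree p ∈ (0,∞). Suppose (U_α) is a sequence of measurable maps M → ℝ^k with ∫_M |U_α|^p dv_g bounded and U_α → U almost everywhere. Then lim_{α→∞} ∫_M (F(U_α) − F(U_α − U)) dv_g = ∫_M F(U) dv_g. -/
open MeasureTheory Filter Topology

section aux
variable {k : ℕ} {p : ℝ}

private lemma cont_np {E : Type*} [NormedAddCommGroup E] (hp : 0 < p) :
    Continuous (fun t : E => ‖t‖ ^ p) := by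
  rw [continuous_iff_continuousAt]
  intro x
  exact (Real.continuousAt_rpow_const _ _ (Or.inr hp.le)).comp continuous_norm.continuousAt

private lemma key_est (hp : 0 < p)
    {F : EuclideanSpace ℝ (Fin k) → ℝ} (hFcont : Continuous F)
    (hFhom : ∀ l : ℝ, 0 < l → ∀ t, F (l • t) = l ^ p * F t)
    {ε : ℝ} (hε : 0 < ε) :
    ∃ C : ℝ, 0 ≤ C ∧ ∀ s t, |F (s + t) - F s| ≤ ε * ‖s‖ ^ p + C * ‖t‖ ^ p := by
  classical
  have hnp : Continuous (fun t : EuclideanSpace ℝ (Fin k) => ‖t‖ ^ p) := cont_np hp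
  set K : Set (EuclideanSpace ℝ (Fin k) × EuclideanSpace ℝ (Fin k)) :=
    {q | ‖q.1‖ ^ p + ‖q.2‖ ^ p = 1} with hKdef
  have hKclosed : IsClosed K :=
    isClosed_eq (((hnp.comp continuous_fst).add (hnp.comp continuous_snd))) continuous_const
  have hle1 : ∀ q ∈ K, ‖q.1‖ ≤ 1 ∧ ‖q.2‖ ≤ 1 := by
    intro q hq
    have h1 : ‖q.1‖ ^ p + ‖q.2‖ ^ p = 1 := hq
    have n1 : (0:ℝ) ≤ ‖q.1‖ ^ p := Real.rpow_nonneg (norm_nonneg _) p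
    have n2 : (0:ℝ) ≤ ‖q.2‖ ^ p := Real.rpow_nonneg (norm_nonneg _) p
    constructor
    · by_contra h
      push_neg at h
      have := (Real.one_lt_rpow_iff (norm_nonneg q.1)).2 (Or.inl ⟨h, hp⟩)
      linarith
    · by_contra h
      push_neg at h
      have := (Real.one_lt_rpow_iff (norm_nonneg q.2)).2 (Or.inl ⟨h, hp⟩)
      linarith
  have hKbdd : Bornology.IsBounded K := by
    apply Bornology.IsBounded.subset
      (Metric.isBounded_closedBall (x := (0 : EuclideanSpace ℝ (Fin k) × EuclideanSpace ℝ (Fin k))) (r := 1))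
    intro q hq
    rcases hle1 q hq with ⟨h1, h2⟩
    simp only [Metric.mem_closedBall, dist_zero_right, Prod.norm_def]
    exact max_le h1 h2
  have hKc : IsCompact K := Metric.isCompact_of_isClosed_isBounded hKclosed hKbdd
  set φ : EuclideanSpace ℝ (Fin k) × EuclideanSpace ℝ (Fin k) → ℝ :=
    fun q => |F (q.1 + q.2) - F q.1| - ε * ‖q.1‖ ^ p with hφdef
  have hφcont : Continuous φ := by
    apply Continuous.sub
    · exact ((hFcont.comp (continuous_fst.add continuous_snd)).sub
        (hFcont.comp continuous_fst)).abs
    · exact continuous_const.mul (hnp.comp continuous_fst)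
  have hKest : ∃ C : ℝ, 0 ≤ C ∧ ∀ q ∈ K, φ q ≤ C * ‖q.2‖ ^ p := by
    set A : Set (EuclideanSpace ℝ (Fin k) × EuclideanSpace ℝ (Fin k)) :=
      K ∩ {q | 0 ≤ φ q} with hAdef
    have hAc : IsCompact A := hKc.inter_right (isClosed_le continuous_const hφcont)
    rcases eq_or_ne A ∅ with hA | hA
    · refine ⟨0, le_refl 0, fun q hq => ?_⟩
      have hq' : q ∉ A := by rw [hA]; exact Set.notMem_empty q
      have hneg : ¬ (0 ≤ φ q) := fun h => hq' ⟨hq, h⟩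
      push_neg at hneg
      calc φ q ≤ 0 := hneg.le
        _ ≤ 0 * ‖q.2‖ ^ p := by simp
    · have hAne : A.Nonempty := Set.nonempty_iff_ne_empty.2 hA
      obtain ⟨q₀, hq₀A, hq₀min⟩ := hAc.exists_isMinOn hAne
        ((hnp.comp continuous_snd).continuousOn)
      obtain ⟨q₁, hq₁A, hq₁max⟩ := hAc.exists_isMaxOn hAne hφcont.continuousOn
      set δ : ℝ := ‖q₀.2‖ ^ p with hδdef
      have hδpos : 0 < δ := by
        rcases eq_or_ne q₀.2 0 with h | h
        · exfalso
          have hφq₀ : 0 ≤ φ q₀ := hq₀A.2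
          have hK0 : q₀ ∈ K := hq₀A.1
          have h1 : ‖q₀.1‖ ^ p = 1 := by
            have := hK0
            simp only [hKdef, Set.mem_setOf_eq, h, norm_zero] at this
            rw [Real.zero_rpow hp.ne'] at this
            linarith
          have h2 : φ q₀ = -ε := by
            simp only [hφdef, h, add_zero, sub_self, abs_zero, h1]
            ring
          linarith [h2 ▸ hφq₀]
        · exact Real.rpow_pos_of_pos (norm_pos_iff.2 h) p
      set m : ℝ := φ q₁ with hmdef
      have hm0 : 0 ≤ m := hq₁A.2
      refine ⟨m / δ, div_nonneg hm0 hδpos.le, fun q hq => ?_⟩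
      by_cases hφq : 0 ≤ φ q
      · have hqA : q ∈ A := ⟨hq, hφq⟩
        have h1 : φ q ≤ m := hq₁max hqA
        have h2 : δ ≤ ‖q.2‖ ^ p := hq₀min hqA
        calc φ q ≤ m := h1
          _ = (m / δ) * δ := by field_simp
          _ ≤ (m / δ) * ‖q.2‖ ^ p :=
              mul_le_mul_of_nonneg_left h2 (div_nonneg hm0 hδpos.le)
      · push_neg at hφq
        have : (0:ℝ) ≤ (m / δ) * ‖q.2‖ ^ p :=
          mul_nonneg (div_nonneg hm0 hδpos.le) (Real.rpow_nonneg (norm_nonneg _) p)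
        exact le_trans hφq.le this
  obtain ⟨C, hC0, hC⟩ := hKest
  refine ⟨C, hC0, fun s t => ?_⟩
  rcases eq_or_ne (‖s‖ ^ p + ‖t‖ ^ p) 0 with hz | hz
  · have n1 : (0:ℝ) ≤ ‖s‖ ^ p := Real.rpow_nonneg (norm_nonneg _) p
    have n2 : (0:ℝ) ≤ ‖t‖ ^ p := Real.rpow_nonneg (norm_nonneg _) p
    have hs0 : ‖s‖ ^ p = 0 := by linarith
    have ht0 : ‖t‖ ^ p = 0 := by linarith
    have hs : s = 0 := by
      by_contra h
      exact absurd hs0 (Real.rpow_pos_of_pos (norm_pos_iff.2 h) p).ne'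
    have ht : t = 0 := by
      by_contra h
      exact absurd ht0 (Real.rpow_pos_of_pos (norm_pos_iff.2 h) p).ne'
    subst hs; subst ht
    simp only [add_zero, sub_self, abs_zero, norm_zero]
    rw [Real.zero_rpow hp.ne']
    simp
  · have hsum_pos : 0 < ‖s‖ ^ p + ‖t‖ ^ p :=
      lt_of_le_of_ne (by positivity) (Ne.symm hz)
    set r : ℝ := (‖s‖ ^ p + ‖t‖ ^ p) ^ p⁻¹ with hrdef
    have hrpos : 0 < r := Real.rpow_pos_of_pos hsum_pos _
    have hrp : r ^ p = ‖s‖ ^ p + ‖t‖ ^ p := Real.rpow_inv_rpow hsum_pos.le hp.ne'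
    have hnorm_smul : ∀ u : EuclideanSpace ℝ (Fin k), ‖r⁻¹ • u‖ ^ p = (r ^ p)⁻¹ * ‖u‖ ^ p := by
      intro u
      rw [norm_smul, Real.norm_eq_abs, abs_of_pos (inv_pos.2 hrpos),
        Real.mul_rpow (inv_pos.2 hrpos).le (norm_nonneg _), Real.inv_rpow hrpos.le]
    have hmem : ((r⁻¹ • s, r⁻¹ • t) :
        EuclideanSpace ℝ (Fin k) × EuclideanSpace ℝ (Fin k)) ∈ K := by
      simp only [hKdef, Set.mem_setOf_eq]
      rw [hnorm_smul, hnorm_smul, ← mul_add, hrp, inv_mul_cancel₀ hsum_pos.ne']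
    have hq := hC _ hmem
    simp only [hφdef] at hq
    have hFs : F s = r ^ p * F (r⁻¹ • s) := by
      rw [← hFhom r hrpos, smul_inv_smul₀ hrpos.ne']
    have hFst : F (s + t) = r ^ p * F (r⁻¹ • s + r⁻¹ • t) := by
      rw [← smul_add, ← hFhom r hrpos, smul_inv_smul₀ hrpos.ne']
    have hns : ‖s‖ ^ p = r ^ p * ‖r⁻¹ • s‖ ^ p := by
      rw [hnorm_smul]; field_simp
    have hnt : ‖t‖ ^ p = r ^ p * ‖r⁻¹ • t‖ ^ p := by
      rw [hnorm_smul]; field_simp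
    have hrp_pos : 0 < r ^ p := Real.rpow_pos_of_pos hrpos p
    rw [hFs, hFst, hns, hnt, ← mul_sub, abs_mul, abs_of_pos hrp_pos]
    calc r ^ p * |F (r⁻¹ • s + r⁻¹ • t) - F (r⁻¹ • s)|
        ≤ r ^ p * (ε * ‖r⁻¹ • s‖ ^ p + C * ‖r⁻¹ • t‖ ^ p) := by
          apply mul_le_mul_of_nonneg_left _ hrp_pos.le
          linarith
      _ = ε * (r ^ p * ‖r⁻¹ • s‖ ^ p) + C * (r ^ p * ‖r⁻¹ • t‖ ^ p) := by ring

end aux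

/-- Generalized Brézis–Lieb lemma: if `F` is continuous, positive away from `0`
and homogeneous of degree `p > 0`, `(U_α)` is bounded in `L^p` and converges
a.e. to `U`, then `∫ (F(U_α) - F(U_α - U)) → ∫ F(U)`. -/
theorem stmt9 (M : Type*) [MeasurableSpace M] (μ : Measure M)
    (k : ℕ) (hk : 1 ≤ k) (p : ℝ) (hp : 0 < p)
    (F : EuclideanSpace ℝ (Fin k) → ℝ)
    (hFcont : Continuous F)
    (hFpos : ∀ t, t ≠ 0 → 0 < F t)
    (hFhom : ∀ l : ℝ, 0 < l → ∀ t, F (l • t) = l ^ p * F t)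
    (U : ℕ → M → EuclideanSpace ℝ (Fin k))
    (U0 : M → EuclideanSpace ℝ (Fin k))
    (hmeas : ∀ α, AEStronglyMeasurable (U α) μ)
    (hint : ∀ α, Integrable (fun x => ‖U α x‖ ^ p) μ)
    (hbdd : ∃ C : ℝ, ∀ α, ∫ x, ‖U α x‖ ^ p ∂μ ≤ C)
    (hae : ∀ᵐ x ∂μ, Tendsto (fun α => U α x) atTop (𝓝 (U0 x))) :
    Tendsto (fun α => ∫ x, (F (U α x) - F (U α x - U0 x)) ∂μ) atTop
      (𝓝 (∫ x, F (U0 x) ∂μ)) := by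
  classical
  obtain ⟨C, hC⟩ := hbdd
  have hnp : Continuous (fun t : EuclideanSpace ℝ (Fin k) => ‖t‖ ^ p) := cont_np hp
  -- F 0 = 0
  have hF0 : F 0 = 0 := by
    have h := hFhom 2 (by norm_num) 0
    rw [smul_zero] at h
    have h2 : (1:ℝ) < (2:ℝ) ^ p := by
      rw [show (1:ℝ) = (2:ℝ) ^ (0:ℝ) by simp [Real.rpow_zero]]
      exact Real.rpow_lt_rpow_left_iff (by norm_num) |>.2 hp
    nlinarith [h, h2]
  -- global bound on |F|
  obtain ⟨C₀, hC₀0, hC₀'⟩ := key_est hp hFcont hFhom (ε := 1) one_pos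
  have hC₀ : ∀ t, |F t| ≤ C₀ * ‖t‖ ^ p := by
    intro t
    have := hC₀' 0 t
    simpa [hF0, norm_zero, Real.zero_rpow hp.ne'] using this
  -- measurability of U0
  have hU0meas : AEStronglyMeasurable U0 μ := aestronglyMeasurable_of_tendsto_ae atTop hmeas hae
  -- nonneg helper
  have hnn : ∀ (f : M → EuclideanSpace ℝ (Fin k)) (x : M), (0:ℝ) ≤ ‖f x‖ ^ p :=
    fun f x => Real.rpow_nonneg (norm_nonneg _) p
  have hC0 : (0:ℝ) ≤ C := le_trans (integral_nonneg (fun x => hnn (U 0) x)) (hC 0)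
  -- Integrability of ‖U0‖^p via Fatou
  have hU0int : Integrable (fun x => ‖U0 x‖ ^ p) μ := by
    have hmeas' : ∀ α, AEMeasurable (fun x => ENNReal.ofReal (‖U α x‖ ^ p)) μ :=
      fun α => ((hnp.comp_aestronglyMeasurable (hmeas α)).aemeasurable).ennreal_ofReal
    have hptt : ∀ᵐ x ∂μ, ENNReal.ofReal (‖U0 x‖ ^ p)
        = Filter.liminf (fun α => ENNReal.ofReal (‖U α x‖ ^ p)) atTop := by
      filter_upwards [hae] with x hx
      have : Tendsto (fun α => ENNReal.ofReal (‖U α x‖ ^ p)) atTop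
          (𝓝 (ENNReal.ofReal (‖U0 x‖ ^ p))) :=
        (ENNReal.continuous_ofReal.tendsto _).comp ((hnp.tendsto _).comp hx)
      exact (this.liminf_eq).symm
    have hlin : ∫⁻ x, ENNReal.ofReal (‖U0 x‖ ^ p) ∂μ ≤ ENNReal.ofReal C := by
      calc ∫⁻ x, ENNReal.ofReal (‖U0 x‖ ^ p) ∂μ
          = ∫⁻ x, Filter.liminf (fun α => ENNReal.ofReal (‖U α x‖ ^ p)) atTop ∂μ :=
            lintegral_congr_ae hptt
        _ ≤ Filter.liminf (fun α => ∫⁻ x, ENNReal.ofReal (‖U α x‖ ^ p) ∂μ) atTop :=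
            lintegral_liminf_le' hmeas'
        _ ≤ ENNReal.ofReal C := by
            apply Filter.liminf_le_of_frequently_le'
            apply Filter.Frequently.of_forall
            intro α
            rw [← ofReal_integral_eq_lintegral_ofReal (hint α)
              (Filter.Eventually.of_forall (fun x => hnn (U α) x))]
            exact ENNReal.ofReal_le_ofReal (hC α)
    refine ⟨hnp.comp_aestronglyMeasurable hU0meas, ?_⟩
    rw [hasFiniteIntegral_iff_ofReal (Filter.Eventually.of_forall (fun x => hnn U0 x))]
    exact lt_of_le_of_lt hlin ENNReal.ofReal_lt_top
  set D : ℝ := ∫ x, ‖U0 x‖ ^ p ∂μ with hDdef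
  have hD0 : 0 ≤ D := integral_nonneg (fun x => hnn U0 x)
  -- (a+b)^p ≤ 2^p (a^p+b^p)
  have hadd : ∀ x y : ℝ, 0 ≤ x → 0 ≤ y → (x + y) ^ p ≤ 2 ^ p * (x ^ p + y ^ p) := by
    intro x y hx hy
    have h1 : x + y ≤ 2 * max x y := by
      rcases max_cases x y with ⟨h, _⟩ | ⟨h, _⟩ <;> rw [h] <;> linarith
    have h2 : (x + y) ^ p ≤ (2 * max x y) ^ p :=
      Real.rpow_le_rpow (by linarith) h1 hp.le
    have h3 : (2 * max x y) ^ p = 2 ^ p * (max x y) ^ p :=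
      Real.mul_rpow (by norm_num) (le_max_of_le_left hx)
    have h4 : (max x y) ^ p ≤ x ^ p + y ^ p := by
      rcases max_cases x y with ⟨h, _⟩ | ⟨h, _⟩ <;> rw [h]
      · nlinarith [Real.rpow_nonneg hy p]
      · nlinarith [Real.rpow_nonneg hx p]
    calc (x + y) ^ p ≤ 2 ^ p * (max x y) ^ p := by rw [← h3]; exact h2
      _ ≤ 2 ^ p * (x ^ p + y ^ p) := by
          apply mul_le_mul_of_nonneg_left h4 (Real.rpow_nonneg (by norm_num) p)
  -- integrability of ‖U α - U0‖^p and bound M₀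
  have hVmeas : ∀ α, AEStronglyMeasurable (fun x => ‖U α x - U0 x‖ ^ p) μ :=
    fun α => hnp.comp_aestronglyMeasurable ((hmeas α).sub hU0meas)
  have hVle : ∀ α x, ‖U α x - U0 x‖ ^ p ≤ 2 ^ p * (‖U α x‖ ^ p + ‖U0 x‖ ^ p) := by
    intro α x
    calc ‖U α x - U0 x‖ ^ p ≤ (‖U α x‖ + ‖U0 x‖) ^ p :=
          Real.rpow_le_rpow (norm_nonneg _) (norm_sub_le _ _) hp.le
      _ ≤ 2 ^ p * (‖U α x‖ ^ p + ‖U0 x‖ ^ p) := hadd _ _ (norm_nonneg _) (norm_nonneg _)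
  have hVint : ∀ α, Integrable (fun x => ‖U α x - U0 x‖ ^ p) μ := by
    intro α
    apply Integrable.mono' (((hint α).add hU0int).const_mul (2 ^ p)) (hVmeas α)
    apply Filter.Eventually.of_forall
    intro x
    rw [Real.norm_eq_abs, abs_of_nonneg (Real.rpow_nonneg (norm_nonneg _) p)]
    simpa using hVle α x
  set M₀ : ℝ := 2 ^ p * (C + D) with hM₀def
  have hM₀0 : 0 ≤ M₀ := by positivity
  have hMbd : ∀ α, ∫ x, ‖U α x - U0 x‖ ^ p ∂μ ≤ M₀ := by
    intro α
    calc ∫ x, ‖U α x - U0 x‖ ^ p ∂μ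
        ≤ ∫ x, 2 ^ p * (‖U α x‖ ^ p + ‖U0 x‖ ^ p) ∂μ :=
          integral_mono (hVint α) (((hint α).add hU0int).const_mul (2 ^ p))
            (fun x => hVle α x)
      _ = 2 ^ p * ((∫ x, ‖U α x‖ ^ p ∂μ) + D) := by
          rw [integral_const_mul, integral_add (hint α) hU0int]
      _ ≤ M₀ := by
          apply mul_le_mul_of_nonneg_left _ (Real.rpow_nonneg (by norm_num) p)
          linarith [hC α]
  -- integrability of F ∘ f
  have hFI : ∀ (f : M → EuclideanSpace ℝ (Fin k)), AEStronglyMeasurable f μ →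
      Integrable (fun x => ‖f x‖ ^ p) μ → Integrable (fun x => F (f x)) μ := by
    intro f hf hfi
    apply Integrable.mono' (hfi.const_mul C₀) (hFcont.comp_aestronglyMeasurable hf)
    apply Filter.Eventually.of_forall
    intro x
    rw [Real.norm_eq_abs]
    exact hC₀ (f x)
  have hFint : ∀ α, Integrable (fun x => F (U α x)) μ := fun α => hFI _ (hmeas α) (hint α)
  have hFVint : ∀ α, Integrable (fun x => F (U α x - U0 x)) μ :=
    fun α => hFI _ ((hmeas α).sub hU0meas) (hVint α)
  have hFU0int : Integrable (fun x => F (U0 x)) μ := hFI _ hU0meas hU0int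
  -- the absolute-value integral tends to 0
  have habs : Tendsto (fun α => ∫ x, |F (U α x) - F (U α x - U0 x) - F (U0 x)| ∂μ)
      atTop (𝓝 0) := by
    rw [Metric.tendsto_atTop]
    intro ε' hε'
    set ε : ℝ := ε' / (2 * (M₀ + 1)) with hεdef
    have hεpos : 0 < ε := by positivity
    obtain ⟨Cε, hCε0, hCε⟩ := key_est hp hFcont hFhom hεpos
    set g : ℕ → M → ℝ := fun α x =>
      max (|F (U α x) - F (U α x - U0 x) - F (U0 x)| - ε * ‖U α x - U0 x‖ ^ p) 0 with hgdef
    have hgmeas : ∀ α, AEStronglyMeasurable (g α) μ := by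
      intro α
      have h1 : AEStronglyMeasurable
          (fun x => |F (U α x) - F (U α x - U0 x) - F (U0 x)| - ε * ‖U α x - U0 x‖ ^ p) μ := by
        apply AEStronglyMeasurable.sub
        · exact continuous_abs.comp_aestronglyMeasurable
            (((hFcont.comp_aestronglyMeasurable (hmeas α)).sub
              (hFcont.comp_aestronglyMeasurable ((hmeas α).sub hU0meas))).sub
              (hFcont.comp_aestronglyMeasurable hU0meas))
        · exact (hVmeas α).const_mul ε
      exact (continuous_id.max continuous_const).comp_aestronglyMeasurable h1
    have hgbound : ∀ α, ∀ᵐ x ∂μ, ‖g α x‖ ≤ (Cε + C₀) * ‖U0 x‖ ^ p := by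
      intro α
      apply Filter.Eventually.of_forall
      intro x
      have hb : |F (U α x) - F (U α x - U0 x) - F (U0 x)| - ε * ‖U α x - U0 x‖ ^ p
          ≤ (Cε + C₀) * ‖U0 x‖ ^ p := by
        have h1 := hCε (U α x - U0 x) (U0 x)
        rw [sub_add_cancel] at h1
        have h2 : |F (U α x) - F (U α x - U0 x) - F (U0 x)|
            ≤ |F (U α x) - F (U α x - U0 x)| + |F (U0 x)| := abs_sub _ _
        have h3 := hC₀ (U0 x)
        nlinarith [h1, h2, h3]
      rw [Real.norm_eq_abs, abs_of_nonneg (le_max_right _ 0)]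
      apply max_le hb
      positivity
    have hgtend : ∀ᵐ x ∂μ, Tendsto (fun α => g α x) atTop (𝓝 0) := by
      filter_upwards [hae] with x hx
      have t1 : Tendsto (fun α => F (U α x)) atTop (𝓝 (F (U0 x))) :=
        (hFcont.tendsto _).comp hx
      have t2 : Tendsto (fun α => U α x - U0 x) atTop (𝓝 0) := by
        have := hx.sub (tendsto_const_nhds (x := U0 x))
        simpa using this
      have t3 : Tendsto (fun α => F (U α x - U0 x)) atTop (𝓝 0) := by
        have := (hFcont.tendsto _).comp t2
        rwa [hF0] at this
      have t4 : Tendsto (fun α => ‖U α x - U0 x‖ ^ p) atTop (𝓝 0) := by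
        have := (hnp.tendsto _).comp t2
        rwa [norm_zero, Real.zero_rpow hp.ne'] at this
      have t5 : Tendsto (fun α =>
          |F (U α x) - F (U α x - U0 x) - F (U0 x)| - ε * ‖U α x - U0 x‖ ^ p) atTop
          (𝓝 0) := by
        have := ((t1.sub t3).sub (tendsto_const_nhds (x := F (U0 x)))).abs.sub
          (t4.const_mul ε)
        simpa using this
      have := t5.max (tendsto_const_nhds (x := (0:ℝ)))
      simpa using this
    have hgint : Tendsto (fun α => ∫ x, g α x ∂μ) atTop (𝓝 0) := by
      have := tendsto_integral_of_dominated_convergence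
        (fun x => (Cε + C₀) * ‖U0 x‖ ^ p) hgmeas (hU0int.const_mul _) hgbound hgtend
      simpa using this
    obtain ⟨N, hN⟩ := (Metric.tendsto_atTop.1 hgint) (ε' / 2) (by positivity)
    refine ⟨N, fun α hα => ?_⟩
    have hgIα : Integrable (g α) μ :=
      Integrable.mono' (hU0int.const_mul (Cε + C₀)) (hgmeas α) (hgbound α)
    have hdint : Integrable (fun x => |F (U α x) - F (U α x - U0 x) - F (U0 x)|) μ :=
      (((hFint α).sub (hFVint α)).sub hFU0int).abs
    have hbnd : ∫ x, |F (U α x) - F (U α x - U0 x) - F (U0 x)| ∂μ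
        ≤ (∫ x, g α x ∂μ) + ε * M₀ := by
      calc ∫ x, |F (U α x) - F (U α x - U0 x) - F (U0 x)| ∂μ
          ≤ ∫ x, (g α x + ε * ‖U α x - U0 x‖ ^ p) ∂μ := by
            apply integral_mono hdint (hgIα.add ((hVint α).const_mul ε))
            intro x
            have : |F (U α x) - F (U α x - U0 x) - F (U0 x)| - ε * ‖U α x - U0 x‖ ^ p
                ≤ g α x := le_max_left _ _
            simp only [Pi.add_apply]
            linarith
        _ = (∫ x, g α x ∂μ) + ε * ∫ x, ‖U α x - U0 x‖ ^ p ∂μ := by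
            rw [integral_add hgIα ((hVint α).const_mul ε), integral_const_mul]
        _ ≤ (∫ x, g α x ∂μ) + ε * M₀ := by
            have := hMbd α
            nlinarith [hεpos.le]
    have hg2 : ∫ x, g α x ∂μ < ε' / 2 := by
      have := hN α hα
      rw [Real.dist_eq, sub_zero] at this
      calc ∫ x, g α x ∂μ ≤ |∫ x, g α x ∂μ| := le_abs_self _
        _ < ε' / 2 := this
    have hεM : ε * M₀ ≤ ε' / 2 := by
      rw [hεdef]
      rw [div_mul_eq_mul_div, div_le_div_iff₀ (by positivity) (by norm_num)]
      nlinarith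
    rw [Real.dist_eq, sub_zero,
      abs_of_nonneg (integral_nonneg (fun x => abs_nonneg _))]
    linarith
  -- conclude
  have hdiff : ∀ α, (∫ x, (F (U α x) - F (U α x - U0 x)) ∂μ) - (∫ x, F (U0 x) ∂μ)
      = ∫ x, (F (U α x) - F (U α x - U0 x) - F (U0 x)) ∂μ := by
    intro α
    have hI : Integrable (fun x => F (U α x) - F (U α x - U0 x)) μ :=
      (hFint α).sub (hFVint α)
    rw [integral_sub hI hFU0int]
  have h0 : Tendsto (fun α =>
      (∫ x, (F (U α x) - F (U α x - U0 x)) ∂μ) - (∫ x, F (U0 x) ∂μ)) atTop (𝓝 0) := by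
    apply squeeze_zero_norm _ habs
    intro α
    rw [hdiff α]
    calc ‖∫ x, (F (U α x) - F (U α x - U0 x) - F (U0 x)) ∂μ‖
        ≤ ∫ x, ‖F (U α x) - F (U α x - U0 x) - F (U0 x)‖ ∂μ :=
          norm_integral_le_integral_norm _
      _ = ∫ x, |F (U α x) - F (U α x - U0 x) - F (U0 x)| ∂μ := by
          simp [Real.norm_eq_abs]
  have := h0.add (tendsto_const_nhds (x := ∫ x, F (U0 x) ∂μ))
  simpa using this
end

section
/- (Comparison with the scalar constant, Proposition: bounds for ℬ₀) Let (M,g) be a compact Riemannian n-manifold, n ≥ 3, F ∈ ℱ_k, G ∈ 𝒢_k, and t₀ ∈ S^{k−1} with F(t₀) = M_F. Then M_F^{2/2*} B₀(n,1,g) / max_{x∈M} G(x,t₀) ≤ ℬ₀(n,F,G,g) ≤ M_F^{2/2*} B₀(n,1,g) / m_G, where m_G = min_{M×S^{k−1}} G. In particular if max_{x∈M} G(x,t₀) = m_G then ℬ₀(n,F,G,g) = M_F^{2/2*} B₀(n,1,g)/m_G. -/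
/-!
Upper bound: split a vector function `U` into its components. Since `F ≤ M_F ‖·‖^{2*}`,
Minkowski's inequality in `L^{2*/2}` applied to `‖U‖² = ∑ Uᵢ²` reduces the vector inequality
to the sum of the scalar ones, and `m_G ‖t‖² ≤ G(x, t)` absorbs `∫ ∑ Uᵢ²` into `∫ G(x, U)`.
Lower bound: test the vector inequality on `u t₀`, for which `F(u t₀) = M_F |u|^{2*}` and
`G(x, u t₀) ≤ max_x G(x, t₀) u²`, so it becomes a scalar inequality with constant
`ℬ₀ max_x G(x, t₀) / M_F^{2/2*}`. Minimality of both second constants gives the two bounds.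
-/

open MeasureTheory

section Homogeneous

variable {E : Type*} [NormedAddCommGroup E] [NormedSpace ℝ E] {f : E → ℝ} {p : ℝ}

theorem le_mul_norm_rpow_of_homogeneous {M : ℝ} (hp : 0 < p)
    (hf : ∀ c : ℝ, 0 ≤ c → ∀ t, f (c • t) = c ^ p * f t) (hM : ∀ t, ‖t‖ = 1 → f t ≤ M)
    (t : E) : f t ≤ M * ‖t‖ ^ p := by
  rcases eq_or_ne t 0 with rfl | ht
  · simpa [Real.zero_rpow hp.ne'] using (hf 0 le_rfl 0).le
  · calc f t = f (‖t‖ • (‖t‖⁻¹ • t)) := by rw [smul_inv_smul₀ (norm_ne_zero_iff.2 ht)]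
      _ = ‖t‖ ^ p * f (‖t‖⁻¹ • t) := hf _ (norm_nonneg _) _
      _ ≤ ‖t‖ ^ p * M := by gcongr; exact hM _ (norm_smul_inv_norm ht)
      _ = M * ‖t‖ ^ p := mul_comm _ _

theorem mul_norm_rpow_le_of_homogeneous {m : ℝ} (hp : 0 < p)
    (hf : ∀ c : ℝ, 0 ≤ c → ∀ t, f (c • t) = c ^ p * f t) (hm : ∀ t, ‖t‖ = 1 → m ≤ f t)
    (t : E) : m * ‖t‖ ^ p ≤ f t := by
  have := le_mul_norm_rpow_of_homogeneous (f := -f) (M := -m) hp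
    (fun c hc t => by simp [hf c hc t]) (fun t ht => neg_le_neg (hm t ht)) t
  simp only [Pi.neg_apply, neg_mul] at this
  linarith

end Homogeneous

section Minkowski

variable {α : Type*} [MeasurableSpace α] {μ : Measure α}

theorem rpow_integral_norm_sum_rpow_le {ι E : Type*} [NormedAddCommGroup E] {q : ℝ}
    (hq : 1 ≤ q) (s : Finset ι) {f : ι → α → E} (hf : ∀ i ∈ s, AEStronglyMeasurable (f i) μ)
    (hfq : ∀ i ∈ s, Integrable (fun x => ‖f i x‖ ^ q) μ) :
    (∫ x, ‖∑ i ∈ s, f i x‖ ^ q ∂μ) ^ q⁻¹ ≤ ∑ i ∈ s, (∫ x, ‖f i x‖ ^ q ∂μ) ^ q⁻¹ := by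
  have hr0 : ENNReal.ofReal q ≠ 0 := by simp only [ne_eq, ENNReal.ofReal_eq_zero, not_le]; linarith
  have hr : (ENNReal.ofReal q).toReal = q := ENNReal.toReal_ofReal (by linarith)
  have hmem : ∀ i ∈ s, MemLp (f i) (ENNReal.ofReal q) μ := fun i hi =>
    (integrable_norm_rpow_iff (hf i hi) hr0 ENNReal.ofReal_ne_top).1 (by rw [hr]; exact hfq i hi)
  have key := eLpNorm_sum_le hf (ENNReal.one_le_ofReal.2 hq)
  rw [(memLp_finsetSum' s hmem).eLpNorm_eq_integral_rpow_norm hr0 ENNReal.ofReal_ne_top,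
    Finset.sum_congr rfl fun i hi =>
      (hmem i hi).eLpNorm_eq_integral_rpow_norm hr0 ENNReal.ofReal_ne_top,
    ← ENNReal.ofReal_sum_of_nonneg fun i _ => by positivity,
    ENNReal.ofReal_le_ofReal_iff (by positivity)] at key
  simpa only [hr, Finset.sum_apply] using key

theorem rpow_integral_euclidean_norm_rpow_le_sum {ι : Type*} [Fintype ι] {p : ℝ} (hp : 2 ≤ p)
    {U : α → EuclideanSpace ℝ ι} (hU : AEStronglyMeasurable U μ)
    (hUp : ∀ i, Integrable (fun x => |U x i| ^ p) μ) :
    (∫ x, ‖U x‖ ^ p ∂μ) ^ (2 / p) ≤ ∑ i, (∫ x, |U x i| ^ p ∂μ) ^ (2 / p) := by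
  have hsq : ∀ a : ℝ, ‖a ^ 2‖ ^ (p / 2) = |a| ^ p := fun a => by
    rw [Real.norm_of_nonneg (sq_nonneg a), Real.rpow_div_two_eq_sqrt _ (sq_nonneg a),
      Real.sqrt_sq_eq_abs]
  have hnorm : ∀ x, ‖∑ i, U x i ^ 2‖ ^ (p / 2) = ‖U x‖ ^ p := fun x => by
    rw [← EuclideanSpace.real_norm_sq_eq, hsq, abs_norm]
  have := rpow_integral_norm_sum_rpow_le (μ := μ) (q := p / 2) (by linarith) Finset.univ
    (f := fun i x => U x i ^ 2) (fun i _ => by fun_prop) (fun i _ => by simpa only [hsq] using hUp i)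
  simpa only [hnorm, hsq, inv_div] using this

end Minkowski

section SecondBestConstant

variable {α ι : Type*} [MeasurableSpace α] {μ : Measure α} {p : ℝ}

theorem vector_sobolev_of_scalar_sobolev [Fintype ι] (hp : 2 ≤ p)
    {F : EuclideanSpace ℝ ι → ℝ} {G : α → EuclideanSpace ℝ ι → ℝ} {MF mG A B : ℝ}
    (hFnn : ∀ t, 0 ≤ F t) (hFle : ∀ t, F t ≤ MF * ‖t‖ ^ p)
    (hMF : 0 ≤ MF) (hGge : ∀ x t, mG * ‖t‖ ^ 2 ≤ G x t) (hmG : 0 < mG) (hB : 0 ≤ B)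
    {U : α → EuclideanSpace ℝ ι} (hU : AEStronglyMeasurable U μ)
    (hUp : Integrable (fun x => ‖U x‖ ^ p) μ) (hGU : Integrable (fun x => G x (U x)) μ)
    (hUip : ∀ i, Integrable (fun x => |U x i| ^ p) μ)
    (hUisq : ∀ i, Integrable (fun x => U x i ^ 2) μ) (d : ι → ℝ)
    (hscalar : ∀ i, (∫ x, |U x i| ^ p ∂μ) ^ (2 / p) ≤ A * d i + B * ∫ x, U x i ^ 2 ∂μ) :
    (∫ x, F (U x) ∂μ) ^ (2 / p) ≤
      MF ^ (2 / p) * A * ∑ i, d i + MF ^ (2 / p) * B / mG * ∫ x, G x (U x) ∂μ := by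
  have hFU : ∫ x, F (U x) ∂μ ≤ MF * ∫ x, ‖U x‖ ^ p ∂μ := by
    rw [← integral_const_mul]
    exact integral_mono_of_nonneg (.of_forall fun x => hFnn _) (hUp.const_mul MF)
      (.of_forall fun x => hFle _)
  have hsq : ∫ x, ‖U x‖ ^ 2 ∂μ ≤ (∫ x, G x (U x) ∂μ) / mG := by
    rw [le_div_iff₀ hmG, ← integral_mul_const]
    refine integral_mono ?_ hGU fun x => by rw [mul_comm]; exact hGge x (U x)
    simp_rw [EuclideanSpace.real_norm_sq_eq]
    exact (integrable_finsetSum _ fun i _ => hUisq i).mul_const mG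
  calc (∫ x, F (U x) ∂μ) ^ (2 / p)
      ≤ (MF * ∫ x, ‖U x‖ ^ p ∂μ) ^ (2 / p) := by
        gcongr
        exact integral_nonneg fun x => hFnn _
    _ = MF ^ (2 / p) * (∫ x, ‖U x‖ ^ p ∂μ) ^ (2 / p) :=
        Real.mul_rpow hMF (integral_nonneg fun x => by positivity)
    _ ≤ MF ^ (2 / p) * ∑ i, (A * d i + B * ∫ x, U x i ^ 2 ∂μ) := by
        gcongr
        exact (rpow_integral_euclidean_norm_rpow_le_sum hp hU hUip).trans
          (Finset.sum_le_sum fun i _ => hscalar i)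
    _ = MF ^ (2 / p) * (A * ∑ i, d i + B * ∫ x, ‖U x‖ ^ 2 ∂μ) := by
        simp_rw [EuclideanSpace.real_norm_sq_eq]
        rw [integral_finsetSum _ fun i _ => hUisq i, Finset.sum_add_distrib, Finset.mul_sum,
          Finset.mul_sum]
    _ ≤ MF ^ (2 / p) * (A * ∑ i, d i + B * ((∫ x, G x (U x) ∂μ) / mG)) := by gcongr
    _ = _ := by ring

theorem scalar_sobolev_of_vector_sobolev {E : Type*} [NormedAddCommGroup E] [NormedSpace ℝ E]
    {F : E → ℝ} {G : α → E → ℝ} {t₀ : E} {MF maxG A B D : ℝ} (hMF : 0 < MF)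
    (hF : ∀ c : ℝ, F (c • t₀) = |c| ^ p * MF) (hG : ∀ x (c : ℝ), G x (c • t₀) = c ^ 2 * G x t₀)
    (hmaxG : ∀ x, G x t₀ ≤ maxG) (hB : 0 ≤ B) {u : α → ℝ}
    (hu : Integrable (fun x => u x ^ 2) μ) (hGu : Integrable (fun x => G x (u x • t₀)) μ)
    (hvector : (∫ x, F (u x • t₀) ∂μ) ^ (2 / p) ≤
      MF ^ (2 / p) * A * D + B * ∫ x, G x (u x • t₀) ∂μ) :
    (∫ x, |u x| ^ p ∂μ) ^ (2 / p) ≤ A * D + B * maxG / MF ^ (2 / p) * ∫ x, u x ^ 2 ∂μ := by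
  have hMFp : 0 < MF ^ (2 / p) := by positivity
  have hGmax : ∫ x, G x (u x • t₀) ∂μ ≤ maxG * ∫ x, u x ^ 2 ∂μ := by
    rw [← integral_const_mul]
    refine integral_mono hGu (hu.const_mul maxG) fun x => ?_
    rw [hG, mul_comm maxG]
    exact mul_le_mul_of_nonneg_left (hmaxG x) (sq_nonneg _)
  simp_rw [hF] at hvector
  rw [integral_mul_const, Real.mul_rpow (integral_nonneg fun x => by positivity) hMF.le]
    at hvector
  rw [← mul_le_mul_iff_right₀ hMFp]
  calc MF ^ (2 / p) * (∫ x, |u x| ^ p ∂μ) ^ (2 / p)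
      ≤ MF ^ (2 / p) * A * D + B * (maxG * ∫ x, u x ^ 2 ∂μ) := by
        rw [mul_comm]
        exact hvector.trans (by gcongr)
    _ = MF ^ (2 / p) * (A * D + B * maxG / MF ^ (2 / p) * ∫ x, u x ^ 2 ∂μ) := by
        field_simp

end SecondBestConstant

/-- `ν` is the Riemannian volume, `S1`/`Sk` the spaces `H^{1,2}(M)`/`H^{1,2}(M, ℝᵏ)`, `dirS`/`dir`
the Dirichlet energies `∫ |∇_g u|²`, and `B0s`/`Bvec` the constants `B₀(n,1,g)`/`ℬ₀(n,F,G,g)`. -/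
theorem stmt14_general {M : Type*} [MeasurableSpace M] (ν : Measure M)
    (n k : ℕ) (hn : 3 ≤ n)
    (p : ℝ) (hp : p = 2 * (n : ℝ) / ((n : ℝ) - 2))
    (F : EuclideanSpace ℝ (Fin k) → ℝ)
    (hFpos : ∀ t, t ≠ 0 → 0 < F t)
    (hFhom : ∀ (c : ℝ) (t), F (c • t) = |c| ^ p * F t)
    (G : M → EuclideanSpace ℝ (Fin k) → ℝ)
    (hGhom : ∀ (x : M) (c : ℝ) (t), G x (c • t) = c ^ 2 * G x t)
    (MF mG maxG : ℝ)
    (t₀ : EuclideanSpace ℝ (Fin k))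
    (hFt₀ : F t₀ = MF) (hMFmax : ∀ t : EuclideanSpace ℝ (Fin k), ‖t‖ = 1 → F t ≤ MF)
    (hMFpos : 0 < MF)
    (hmG : ∀ (x : M) (t : EuclideanSpace ℝ (Fin k)), ‖t‖ = 1 → mG ≤ G x t)
    (hmGpos : 0 < mG)
    (hmaxG : ∀ x : M, G x t₀ ≤ maxG)
    (hmaxGpos : 0 < maxG)
    (S1 : Set (M → ℝ)) (Sk : Set (M → EuclideanSpace ℝ (Fin k)))
    (dirS : (M → ℝ) → ℝ) (dir : (M → EuclideanSpace ℝ (Fin k)) → ℝ)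
    (A0 : ℝ)
    (htest : ∀ u ∈ S1, (fun x => u x • t₀) ∈ Sk ∧ dir (fun x => u x • t₀) = dirS u)
    (hcomp : ∀ U ∈ Sk, (∀ i : Fin k, (fun x => U x i) ∈ S1) ∧
      dir U = ∑ i, dirS (fun x => U x i))
    (hintk : ∀ U ∈ Sk, Integrable (fun x => ‖U x‖ ^ p) ν ∧ AEStronglyMeasurable U ν)
    (hintG : ∀ U ∈ Sk, Integrable (fun x => G x (U x)) ν)
    (hint1 : ∀ u ∈ S1, Integrable (fun x => |u x| ^ p) ν ∧
      Integrable (fun x => (u x) ^ 2) ν)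
    (B0s : ℝ) (hB0s_nn : 0 ≤ B0s)
    (hB0s_valid : ∀ u ∈ S1, (∫ x, |u x| ^ p ∂ν) ^ (2 / p) ≤
      A0 * dirS u + B0s * ∫ x, (u x) ^ 2 ∂ν)
    (hB0s_least : ∀ B : ℝ, (∀ u ∈ S1, (∫ x, |u x| ^ p ∂ν) ^ (2 / p) ≤
      A0 * dirS u + B * ∫ x, (u x) ^ 2 ∂ν) → B0s ≤ B)
    (Bvec : ℝ) (hBvec_nn : 0 ≤ Bvec)
    (hBvec_valid : ∀ U ∈ Sk, (∫ x, F (U x) ∂ν) ^ (2 / p) ≤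
      MF ^ (2 / p) * A0 * dir U + Bvec * ∫ x, G x (U x) ∂ν)
    (hBvec_least : ∀ B : ℝ, (∀ U ∈ Sk, (∫ x, F (U x) ∂ν) ^ (2 / p) ≤
      MF ^ (2 / p) * A0 * dir U + B * ∫ x, G x (U x) ∂ν) → Bvec ≤ B) :
    MF ^ (2 / p) * B0s / maxG ≤ Bvec ∧
      Bvec ≤ MF ^ (2 / p) * B0s / mG ∧
      (maxG = mG → Bvec = MF ^ (2 / p) * B0s / mG) := by
  have hp2 : 2 ≤ p := by
    have hn3 : (3 : ℝ) ≤ n := by exact_mod_cast hn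
    rw [hp, le_div_iff₀ (by linarith)]
    linarith
  have hp0 : 0 < p := by linarith
  have hFnn : ∀ t, 0 ≤ F t := fun t => by
    rcases eq_or_ne t 0 with rfl | ht
    · simpa [Real.zero_rpow hp0.ne'] using (hFhom 0 0).ge
    · exact (hFpos t ht).le
  have hFle := le_mul_norm_rpow_of_homogeneous hp0
    (fun c hc t => by rw [hFhom, abs_of_nonneg hc]) hMFmax
  have hGge : ∀ x t, mG * ‖t‖ ^ 2 ≤ G x t := fun x t => by
    simpa only [Real.rpow_two] using mul_norm_rpow_le_of_homogeneous two_pos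
      (fun c _ t => by rw [hGhom, Real.rpow_two]) (hmG x) t
  have hupper : Bvec ≤ MF ^ (2 / p) * B0s / mG := hBvec_least _ fun U hU => by
    obtain ⟨hUi, hdir⟩ := hcomp U hU
    rw [hdir]
    exact vector_sobolev_of_scalar_sobolev hp2 hFnn hFle hMFpos.le hGge hmGpos hB0s_nn
      (hintk U hU).2 (hintk U hU).1 (hintG U hU) (fun i => (hint1 _ (hUi i)).1)
      (fun i => (hint1 _ (hUi i)).2) _ fun i => hB0s_valid _ (hUi i)
  have hscalar : B0s ≤ Bvec * maxG / MF ^ (2 / p) := hB0s_least _ fun u hu => by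
    obtain ⟨hUk, hdir⟩ := htest u hu
    exact scalar_sobolev_of_vector_sobolev hMFpos (fun c => by rw [hFhom, hFt₀])
      (fun x c => hGhom x c t₀) hmaxG hBvec_nn (hint1 u hu).2 (hintG _ hUk)
      (hdir ▸ hBvec_valid _ hUk)
  have hlower : MF ^ (2 / p) * B0s / maxG ≤ Bvec := by
    rw [le_div_iff₀ (by positivity)] at hscalar
    rw [div_le_iff₀ hmaxGpos]
    linarith
  exact ⟨hlower, hupper, fun h => le_antisymm hupper (h ▸ hlower)⟩

/-- Bounds for the vector second best constant by the scalar one: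
`M_F^{2/2*} B₀(n,1,g) / max_x G(x,t₀) ≤ ℬ₀(n,F,G,g) ≤ M_F^{2/2*} B₀(n,1,g) / m_G`,
and equality in the second bound when `max_x G(x,t₀) = m_G`.  The manifold data
are abstracted: `ν` is the Riemannian volume, `dirS`/`dir` the scalar/vector
Dirichlet energies, `S1`/`Sk` the scalar/vector Sobolev classes (compatible
under forming `u • t₀` and taking components), and the scalar and vector
saturated sharp inequalities are assumed valid with least constants `B0s` and
`Bvec` respectively. -/
theorem stmt14 {M : Type*} [MeasurableSpace M] (ν : Measure M) [IsFiniteMeasure ν]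
    (n k : ℕ) (hn : 3 ≤ n) (hk : 1 ≤ k)
    (p : ℝ) (hp : p = 2 * (n : ℝ) / ((n : ℝ) - 2))
    (F : EuclideanSpace ℝ (Fin k) → ℝ)
    (hFcont : Continuous F)
    (hFpos : ∀ t, t ≠ 0 → 0 < F t)
    (hFhom : ∀ (c : ℝ) (t), F (c • t) = |c| ^ p * F t)
    (G : M → EuclideanSpace ℝ (Fin k) → ℝ)
    (hGhom : ∀ (x : M) (c : ℝ) (t), G x (c • t) = c ^ 2 * G x t)
    (MF mG maxG : ℝ)
    (t₀ : EuclideanSpace ℝ (Fin k)) (ht₀ : ‖t₀‖ = 1)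
    (hFt₀ : F t₀ = MF) (hMFmax : ∀ t : EuclideanSpace ℝ (Fin k), ‖t‖ = 1 → F t ≤ MF)
    (hMFpos : 0 < MF)
    (hmG : ∀ (x : M) (t : EuclideanSpace ℝ (Fin k)), ‖t‖ = 1 → mG ≤ G x t)
    (hmGpos : 0 < mG)
    (hmaxG : ∀ x : M, G x t₀ ≤ maxG)
    (hmaxGpos : 0 < maxG)
    (S1 : Set (M → ℝ)) (Sk : Set (M → EuclideanSpace ℝ (Fin k)))
    (dirS : (M → ℝ) → ℝ) (dir : (M → EuclideanSpace ℝ (Fin k)) → ℝ)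
    (A0 : ℝ) (hA0 : 0 < A0)
    (htest : ∀ u ∈ S1, (fun x => u x • t₀) ∈ Sk ∧ dir (fun x => u x • t₀) = dirS u)
    (hcomp : ∀ U ∈ Sk, (∀ i : Fin k, (fun x => U x i) ∈ S1) ∧
      dir U = ∑ i, dirS (fun x => U x i))
    (hintk : ∀ U ∈ Sk, Integrable (fun x => ‖U x‖ ^ p) ν ∧ AEStronglyMeasurable U ν)
    (hintG : ∀ U ∈ Sk, Integrable (fun x => G x (U x)) ν)
    (hint1 : ∀ u ∈ S1, Integrable (fun x => |u x| ^ p) ν ∧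
      Integrable (fun x => (u x) ^ 2) ν)
    (B0s : ℝ) (hB0s_nn : 0 ≤ B0s)
    (hB0s_valid : ∀ u ∈ S1, (∫ x, |u x| ^ p ∂ν) ^ (2 / p) ≤
      A0 * dirS u + B0s * ∫ x, (u x) ^ 2 ∂ν)
    (hB0s_least : ∀ B : ℝ, (∀ u ∈ S1, (∫ x, |u x| ^ p ∂ν) ^ (2 / p) ≤
      A0 * dirS u + B * ∫ x, (u x) ^ 2 ∂ν) → B0s ≤ B)
    (Bvec : ℝ) (hBvec_nn : 0 ≤ Bvec)
    (hBvec_valid : ∀ U ∈ Sk, (∫ x, F (U x) ∂ν) ^ (2 / p) ≤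
      MF ^ (2 / p) * A0 * dir U + Bvec * ∫ x, G x (U x) ∂ν)
    (hBvec_least : ∀ B : ℝ, (∀ U ∈ Sk, (∫ x, F (U x) ∂ν) ^ (2 / p) ≤
      MF ^ (2 / p) * A0 * dir U + B * ∫ x, G x (U x) ∂ν) → Bvec ≤ B) :
    MF ^ (2 / p) * B0s / maxG ≤ Bvec ∧
      Bvec ≤ MF ^ (2 / p) * B0s / mG ∧
      (maxG = mG → Bvec = MF ^ (2 / p) * B0s / mG) :=
  stmt14_general ν n k hn p hp F hFpos hFhom G hGhom MF mG maxG t₀ hFt₀ hMFmax hMFpos hmG hmGpos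
    hmaxG hmaxGpos S1 Sk dirS dir A0 htest hcomp hintk hintG hint1 B0s hB0s_nn hB0s_valid hB0s_least
    Bvec hBvec_nn hBvec_valid hBvec_least
end

section
/- (Geometric lower bound, Proposition 3(a)) Let (M,g) be a compact Riemannian n-manifold with n ≥ 4, F ∈ ℱ_k, G ∈ 𝒢_k, and assume the scalar Hebey–Vaugon bound B₀(n,β,g) β(x) ≥ ((n−2)/(4(n−1))) A₀(n) S_g(x) holds for all positive continuous β and all x ∈ M. Then for every x ∈ M and every t₀ ∈ S^{k−1} with F(t₀) = M_F: ℬ₀(n,F,G,g) G(x,t₀) ≥ ((n−2)/(4(n−1))) 𝒜₀(n,F) S_g(x). -/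
open MeasureTheory

/-!
Testing the vector inequality with the maps `U = u • t₀`, the homogeneity of `F` and `G` turns
it into the scalar inequality with weight `β = G(·, t₀)` and constant `ℬ₀ / M_F^{2/p}`.
Minimality of `B₀(β)` then gives `B₀(β) ≤ ℬ₀ / M_F^{2/p}`, and the scalar bound at `x`
multiplied by `M_F^{2/p}` is the claim.
-/

lemma integral_mul_const_rpow {α : Type*} [MeasurableSpace α] (μ : Measure α) {f : α → ℝ}
    (hf : 0 ≤ ∫ x, f x ∂μ) {c : ℝ} (hc : 0 ≤ c) (q : ℝ) :
    (∫ x, f x * c ∂μ) ^ q = c ^ q * (∫ x, f x ∂μ) ^ q := by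
  rw [integral_mul_const, Real.mul_rpow hf hc, mul_comm]

lemma le_add_div_mul_of_mul_le {a b B I c : ℝ} (hc : 0 < c)
    (h : c * a ≤ c * b + B * I) : a ≤ b + B / c * I := by
  have hsplit : b + B / c * I = (c * b + B * I) / c := by field_simp
  rw [hsplit, le_div_iff₀ hc]
  linarith

lemma scalar_sobolev_of_vector {M : Type*} [MeasurableSpace M] (ν : Measure M) {k : ℕ}
    {p A0 MF Bvec : ℝ} (hMFpos : 0 < MF) {F : EuclideanSpace ℝ (Fin k) → ℝ}
    (hFhom : ∀ (c : ℝ) (t), F (c • t) = |c| ^ p * F t)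
    {t₀ : EuclideanSpace ℝ (Fin k)} (hFt₀ : F t₀ = MF)
    {G : M → EuclideanSpace ℝ (Fin k) → ℝ}
    (hGhom : ∀ (x : M) (c : ℝ) (t), G x (c • t) = c ^ 2 * G x t)
    {S1 : Set (M → ℝ)} {Sk : Set (M → EuclideanSpace ℝ (Fin k))}
    {dirS : (M → ℝ) → ℝ} {dir : (M → EuclideanSpace ℝ (Fin k)) → ℝ}
    (htest : ∀ u ∈ S1, (fun x => u x • t₀) ∈ Sk ∧ dir (fun x => u x • t₀) = dirS u)
    (hBvec_valid : ∀ U ∈ Sk, (∫ x, F (U x) ∂ν) ^ (2 / p) ≤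
      MF ^ (2 / p) * A0 * dir U + Bvec * ∫ x, G x (U x) ∂ν) :
    ∀ u ∈ S1, (∫ x, |u x| ^ p ∂ν) ^ (2 / p) ≤
      A0 * dirS u + Bvec / MF ^ (2 / p) * ∫ x, G x t₀ * u x ^ 2 ∂ν := by
  intro u hu
  obtain ⟨hUk, hdir⟩ := htest u hu
  have hF : (fun x => F (u x • t₀)) = fun x => |u x| ^ p * MF := by
    funext x; rw [hFhom, hFt₀]
  have hG : (fun x => G x (u x • t₀)) = fun x => G x t₀ * u x ^ 2 := by
    funext x; rw [hGhom, mul_comm]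
  have hvec := hBvec_valid _ hUk
  simp only [hF, hG, hdir] at hvec
  have hLp_nonneg : 0 ≤ ∫ x, |u x| ^ p ∂ν :=
    integral_nonneg fun x => Real.rpow_nonneg (abs_nonneg _) _
  rw [integral_mul_const_rpow ν hLp_nonneg hMFpos.le, mul_assoc] at hvec
  exact le_add_div_mul_of_mul_le (Real.rpow_pos_of_pos hMFpos _) hvec

theorem stmt16_general {M : Type*} [TopologicalSpace M] [MeasurableSpace M] (ν : Measure M)
    (n k : ℕ)
    (p : ℝ)
    (A0 : ℝ)
    (Sg : M → ℝ)
    (F : EuclideanSpace ℝ (Fin k) → ℝ)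
    (hFhom : ∀ (c : ℝ) (t), F (c • t) = |c| ^ p * F t)
    (MF : ℝ) (hMFpos : 0 < MF)
    (t₀ : EuclideanSpace ℝ (Fin k))
    (hFt₀ : F t₀ = MF)
    (G : M → EuclideanSpace ℝ (Fin k) → ℝ)
    (hGhom : ∀ (x : M) (c : ℝ) (t), G x (c • t) = c ^ 2 * G x t)
    (hGcont : Continuous fun x : M => G x t₀)
    (hGpos : ∀ x : M, 0 < G x t₀)
    (S1 : Set (M → ℝ)) (Sk : Set (M → EuclideanSpace ℝ (Fin k)))
    (dirS : (M → ℝ) → ℝ) (dir : (M → EuclideanSpace ℝ (Fin k)) → ℝ)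
    (htest : ∀ u ∈ S1, (fun x => u x • t₀) ∈ Sk ∧ dir (fun x => u x • t₀) = dirS u)
    (B0 : (M → ℝ) → ℝ)
    (hB0_least : ∀ (β : M → ℝ) (B : ℝ),
      (∀ u ∈ S1, (∫ x, |u x| ^ p ∂ν) ^ (2 / p) ≤
        A0 * dirS u + B * ∫ x, β x * (u x) ^ 2 ∂ν) → B0 β ≤ B)
    (hHV : ∀ β : M → ℝ, Continuous β → (∀ x, 0 < β x) → ∀ x : M,
      ((n : ℝ) - 2) / (4 * ((n : ℝ) - 1)) * A0 * Sg x ≤ B0 β * β x)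
    (Bvec : ℝ)
    (hBvec_valid : ∀ U ∈ Sk, (∫ x, F (U x) ∂ν) ^ (2 / p) ≤
      MF ^ (2 / p) * A0 * dir U + Bvec * ∫ x, G x (U x) ∂ν) :
    ∀ x : M, ((n : ℝ) - 2) / (4 * ((n : ℝ) - 1)) * (MF ^ (2 / p) * A0) * Sg x ≤
      Bvec * G x t₀ := by
  intro x
  set c := MF ^ (2 / p)
  have hc : 0 < c := Real.rpow_pos_of_pos hMFpos _
  have hB0 : B0 (fun y => G y t₀) ≤ Bvec / c := hB0_least _ _ <|
    scalar_sobolev_of_vector ν hMFpos hFhom hFt₀ hGhom htest hBvec_valid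
  have hscalar : ((n : ℝ) - 2) / (4 * ((n : ℝ) - 1)) * A0 * Sg x ≤ Bvec / c * G x t₀ :=
    (hHV _ hGcont hGpos x).trans (mul_le_mul_of_nonneg_right hB0 (hGpos x).le)
  calc ((n : ℝ) - 2) / (4 * ((n : ℝ) - 1)) * (c * A0) * Sg x
      = c * (((n : ℝ) - 2) / (4 * ((n : ℝ) - 1)) * A0 * Sg x) := by ring
    _ ≤ c * (Bvec / c * G x t₀) := mul_le_mul_of_nonneg_left hscalar hc.le
    _ = Bvec * G x t₀ := by field_simp

/-- Geometric lower bound (Proposition 3(a)): on a compact Riemannian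
`n`-manifold with `n ≥ 4`, assuming the scalar Hebey–Vaugon bound
`B₀(n,β,g) β(x) ≥ ((n-2)/(4(n-1))) A₀(n) S_g(x)` for all positive continuous
`β`, one has, for every `x` and every maximum point `t₀` of `F` on `S^{k-1}`,
`ℬ₀(n,F,G,g) G(x,t₀) ≥ ((n-2)/(4(n-1))) 𝒜₀(n,F) S_g(x)`, where
`𝒜₀(n,F) = M_F^{2/2*} A₀(n)`.  The manifold data are abstracted by the volume
measure `ν`, the Dirichlet energies `dirS`/`dir`, the Sobolev classes `S1`/`Sk`
(compatible under `u ↦ u • t₀`), the scalar curvature `Sg`, the scalar second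
best constant `B0 β` (characterized as the least valid constant) and the vector
second best constant `Bvec` (for which the saturated inequality is valid). -/
theorem stmt16 {M : Type*} [TopologicalSpace M] [CompactSpace M] [MeasurableSpace M] (ν : Measure M)
    (n k : ℕ) (hn : 4 ≤ n) (hk : 1 ≤ k)
    (p : ℝ) (hp : p = 2 * (n : ℝ) / ((n : ℝ) - 2))
    (A0 : ℝ) (hA0 : 0 < A0)
    (Sg : M → ℝ)
    (F : EuclideanSpace ℝ (Fin k) → ℝ)
    (hFcont : Continuous F)
    (hFpos : ∀ t, t ≠ 0 → 0 < F t)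
    (hFhom : ∀ (c : ℝ) (t), F (c • t) = |c| ^ p * F t)
    (MF : ℝ) (hMFpos : 0 < MF)
    (t₀ : EuclideanSpace ℝ (Fin k)) (ht₀ : ‖t₀‖ = 1)
    (hFt₀ : F t₀ = MF) (hMFmax : ∀ t : EuclideanSpace ℝ (Fin k), ‖t‖ = 1 → F t ≤ MF)
    (G : M → EuclideanSpace ℝ (Fin k) → ℝ)
    (hGhom : ∀ (x : M) (c : ℝ) (t), G x (c • t) = c ^ 2 * G x t)
    (hGcont : Continuous fun x : M => G x t₀)
    (hGpos : ∀ x : M, 0 < G x t₀)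
    (S1 : Set (M → ℝ)) (Sk : Set (M → EuclideanSpace ℝ (Fin k)))
    (dirS : (M → ℝ) → ℝ) (dir : (M → EuclideanSpace ℝ (Fin k)) → ℝ)
    (htest : ∀ u ∈ S1, (fun x => u x • t₀) ∈ Sk ∧ dir (fun x => u x • t₀) = dirS u)
    (B0 : (M → ℝ) → ℝ)
    (hB0_least : ∀ (β : M → ℝ) (B : ℝ),
      (∀ u ∈ S1, (∫ x, |u x| ^ p ∂ν) ^ (2 / p) ≤
        A0 * dirS u + B * ∫ x, β x * (u x) ^ 2 ∂ν) → B0 β ≤ B)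
    (hHV : ∀ β : M → ℝ, Continuous β → (∀ x, 0 < β x) → ∀ x : M,
      ((n : ℝ) - 2) / (4 * ((n : ℝ) - 1)) * A0 * Sg x ≤ B0 β * β x)
    (Bvec : ℝ)
    (hBvec_valid : ∀ U ∈ Sk, (∫ x, F (U x) ∂ν) ^ (2 / p) ≤
      MF ^ (2 / p) * A0 * dir U + Bvec * ∫ x, G x (U x) ∂ν) :
    ∀ x : M, ((n : ℝ) - 2) / (4 * ((n : ℝ) - 1)) * (MF ^ (2 / p) * A0) * Sg x ≤
      Bvec * G x t₀ :=
  stmt16_general ν n k p A0 Sg F hFhom MF hMFpos t₀ hFt₀ G hGhom hGcont hGpos S1 Sk dirS dir htest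
    B0 hB0_least hHV Bvec hBvec_valid
end
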